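/- arXiv:0911.1724 — 3 statements merged into one kernel-verified Lean document; each statement's English description precedes it below -/
import Mathlib

section
/- Let H be a self-adjoint operator on a finite-dimensional complex inner product space of dimension D, with D pairwise distinct eigenvalues E₁,…,E_D and corresponding orthonormal eigenbasis φ₁,…,φ_D, and let P be an orthogonal projection. Let η, δ' ∈ (0,1). If ⟨φ_α, P φ_α⟩ ≥ 1 − ηδ' for every α, then for every unit vector ψ₀, liminf_{T→∞} (1/T)·Leb{t ∈ (0,T) : ⟨e^{−iHt} ψ₀, P e^{−iHt} ψ₀⟩ > 1 − η} ≥ 1 − δ', where Leb denotes Lebesgue measure. -/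
/-!
In the eigenbasis, `⟪ψ t, (1 - P) ψ t⟫` with `ψ t = e^{-iHt} ψ₀` is a trigonometric polynomial
in `t` whose frequencies are the gaps `E α - E β`. For a non-degenerate spectrum only the
diagonal terms survive time averaging, so the long-time average of this nonnegative function is
`∑ α, |⟪φ α, ψ₀⟫|² ⟪φ α, (1 - P) φ α⟫ ≤ ηδ'`. By Markov's inequality the fraction of `(0, T)`
where it is at least `η` is then asymptotically at most `δ'`; since `e^{-iHt}` is unitary, it
equals `1 - ⟪ψ t, P ψ t⟫`.
-/

open MeasureTheory Filter Complex Set Topology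
open scoped InnerProductSpace

theorem tendsto_average_cexp_I_mul (w : ℝ) :
    Tendsto (fun T : ℝ => (∫ t in (0:ℝ)..T, exp (I * w * t)) / T) atTop
      (𝓝 (if w = 0 then 1 else 0)) := by
  split_ifs with hw
  · subst hw
    refine tendsto_const_nhds.congr' ?_
    filter_upwards [eventually_ne_atTop 0] with T hT
    simp [div_self (ofReal_ne_zero.mpr hT)]
  · have hc : I * w ≠ 0 := mul_ne_zero I_ne_zero (ofReal_ne_zero.mpr hw)
    refine squeeze_zero_norm' (a := fun T : ℝ => 2 / ‖I * (w : ℂ)‖ / T) ?_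
      (tendsto_const_nhds.div_atTop tendsto_id)
    filter_upwards [eventually_gt_atTop 0] with T hT
    have hphase : ‖exp (I * w * T)‖ = 1 := by
      rw [mul_assoc, ← ofReal_mul, norm_exp_I_mul_ofReal]
    have hnum : ‖exp (I * w * T) - exp (I * w * ((0 : ℝ) : ℂ))‖ ≤ 2 := by
      calc ‖exp (I * w * T) - exp (I * w * ((0 : ℝ) : ℂ))‖
          ≤ ‖exp (I * w * T)‖ + ‖exp (I * w * ((0 : ℝ) : ℂ))‖ := norm_sub_le _ _
        _ = 2 := by norm_num [hphase]
    rw [integral_exp_mul_complex hc, norm_div, norm_div, norm_real, Real.norm_of_nonneg hT.le]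
    gcongr

theorem tendsto_average_sum_cexp_I_mul {ι : Type*} [Fintype ι] (a : ι → ℂ) (w : ι → ℝ) :
    Tendsto (fun T : ℝ => (∫ t in (0:ℝ)..T, ∑ k, a k * exp (I * w k * t)) / T) atTop
      (𝓝 (∑ k, if w k = 0 then a k else 0)) := by
  have hsum : ∀ T : ℝ, (∫ t in (0:ℝ)..T, ∑ k, a k * exp (I * w k * t)) / T =
      ∑ k, a k * ((∫ t in (0:ℝ)..T, exp (I * w k * t)) / T) := by
    intro T
    rw [intervalIntegral.integral_finsetSum fun k _ =>
      (by fun_prop : Continuous fun t : ℝ => a k * exp (I * w k * t)).intervalIntegrable 0 T,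
      Finset.sum_div]
    simp_rw [intervalIntegral.integral_const_mul, mul_div_assoc]
  simp_rw [hsum]
  refine tendsto_finsetSum _ fun k _ => ?_
  simpa [mul_ite] using (tendsto_average_cexp_I_mul (w k)).const_mul (a k)

theorem measureReal_univ_sub_integral_div_le_measureReal_lt {α : Type*} [MeasurableSpace α]
    {μ : Measure α} [IsFiniteMeasure μ] {g : α → ℝ} {η : ℝ} (hη : 0 < η) (hg0 : 0 ≤ g)
    (hg : Integrable g μ) : μ.real univ - (∫ x, g x ∂μ) / η ≤ μ.real {x | g x < η} := by
  have hmarkov : μ.real {x | η ≤ g x} ≤ (∫ x, g x ∂μ) / η := by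
    rw [le_div_iff₀' hη]
    exact mul_meas_ge_le_integral_of_nonneg (ae_of_all μ hg0) hg η
  have hsplit := measureReal_add_measureReal_compl₀ (μ := μ) (s := {x | g x < η})
    (nullMeasurableSet_lt hg.aemeasurable aemeasurable_const)
  simp only [compl_ofPred, not_lt] at hsplit
  linarith

theorem one_sub_div_le_liminf_volume_lt {g : ℝ → ℝ} {η L : ℝ} (hη : 0 < η) (hg : Continuous g)
    (hg0 : 0 ≤ g) (hL : Tendsto (fun T : ℝ => (∫ t in (0:ℝ)..T, g t) / T) atTop (𝓝 L)) :
    1 - L / η ≤ liminf (fun T : ℝ => volume.real {t ∈ Ioo (0:ℝ) T | g t < η} / T) atTop := by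
  have hbound : ∀ T > 0, 1 - (∫ t in (0:ℝ)..T, g t) / T / η ≤
      volume.real {t ∈ Ioo (0:ℝ) T | g t < η} / T := by
    intro T hT
    have h := measureReal_univ_sub_integral_div_le_measureReal_lt
      (μ := volume.restrict (Ioo 0 T)) hη hg0 (hg.integrableOn_Icc.mono_set Ioo_subset_Icc_self)
    rw [measureReal_restrict_apply_univ, Real.volume_real_Ioo_of_le hT.le, sub_zero,
      measureReal_restrict_apply (measurableSet_lt hg.measurable measurable_const),
      ← integral_Ioc_eq_integral_Ioo, ← intervalIntegral.integral_of_le hT.le, inter_comm] at h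
    have hrescale : (∫ t in (0:ℝ)..T, g t) / T / η * T = (∫ t in (0:ℝ)..T, g t) / η := by
      field_simp
    rwa [le_div_iff₀ hT, sub_mul, one_mul, hrescale]
  have hlower : Tendsto (fun T : ℝ => 1 - (∫ t in (0:ℝ)..T, g t) / T / η) atTop (𝓝 (1 - L / η)) :=
    tendsto_const_nhds.sub (hL.div_const η)
  have hle_one : ∀ᶠ T in atTop, volume.real {t ∈ Ioo (0:ℝ) T | g t < η} / T ≤ 1 := by
    filter_upwards [eventually_gt_atTop 0] with T hT
    rw [div_le_one hT]
    calc _ ≤ volume.real (Ioo 0 T) := measureReal_mono (sep_subset _ _) measure_Ioo_lt_top.ne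
      _ = T := by simp [hT.le]
  rw [← hlower.liminf_eq]
  exact liminf_le_liminf ((eventually_gt_atTop 0).mono hbound) hlower.isBoundedUnder_ge
    (isCoboundedUnder_ge_of_eventually_le atTop hle_one)

theorem NormedSpace.exp_apply_of_apply_eq_smul {𝕂 V : Type*} [RCLike 𝕂] [NormedAddCommGroup V]
    [NormedSpace 𝕂 V] [CompleteSpace V] {A : V →L[𝕂] V} {x : V} {c : 𝕂} (h : A x = c • x) :
    NormedSpace.exp A x = NormedSpace.exp c • x := by
  have hpow : ∀ n : ℕ, (A ^ n) x = c ^ n • x := by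
    intro n
    induction n with
    | zero => simp
    | succ n ih => rw [pow_succ', mul_apply_eq_comp, ih, map_smul, h, smul_smul, pow_succ]
  have hA := (NormedSpace.exp_series_hasSum_exp' (𝕂 := 𝕂) A).mapL (ContinuousLinearMap.apply 𝕂 V x)
  refine hA.unique ?_
  convert (NormedSpace.exp_series_hasSum_exp' (𝕂 := 𝕂) c).smul_const x using 2 with n
  simp [hpow, smul_smul]

theorem norm_exp_smul_apply_of_isSelfAdjoint {V : Type*} [NormedAddCommGroup V]
    [InnerProductSpace ℂ V] [CompleteSpace V] {H : V →L[ℂ] V} (hH : IsSelfAdjoint H) (t : ℝ)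
    (x : V) : ‖NormedSpace.exp ((-(I * t)) • H) x‖ = ‖x‖ := by
  let _ : NormedAlgebra ℚ (V →L[ℂ] V) := .restrictScalars ℚ ℂ _
  have hskew : -(I * t) ∈ skewAdjoint ℂ := by simp [skewAdjoint.mem_iff]
  have hu := NormedSpace.exp_mem_unitary_of_mem_skewAdjoint (hH.smul_mem_skewAdjoint hskew)
  exact ContinuousLinearMap.norm_map_of_mem_unitary hu x

section Eigenbasis

variable {V ι : Type*} [NormedAddCommGroup V] [InnerProductSpace ℂ V] [CompleteSpace V]
  [Fintype ι] (b : OrthonormalBasis ι ℂ V) {H : V →L[ℂ] V} {E : ι → ℝ}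

theorem exp_smul_apply_eq_sum (heig : ∀ i, H (b i) = (E i : ℂ) • b i) (t : ℝ) (x : V) :
    NormedSpace.exp ((-(I * t)) • H) x = ∑ i, (exp (-(I * E i * t)) * ⟪b i, x⟫_ℂ) • b i := by
  conv_lhs => rw [← b.sum_repr' x]
  rw [map_sum]
  refine Finset.sum_congr rfl fun i _ => ?_
  have hi : ((-(I * t)) • H) (b i) = (-(I * E i * t)) • b i := by
    rw [smul_apply, heig, smul_smul]
    ring_nf
  rw [map_smul, NormedSpace.exp_apply_of_apply_eq_smul hi, ← exp_eq_exp_ℂ, smul_smul, mul_comm]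

theorem inner_exp_smul_apply_eq_sum (heig : ∀ i, H (b i) = (E i : ℂ) • b i) (A : V →L[ℂ] V)
    (x : V) (t : ℝ) :
    ⟪NormedSpace.exp ((-(I * t)) • H) x, A (NormedSpace.exp ((-(I * t)) • H) x)⟫_ℂ =
      ∑ p : ι × ι, ⟪x, b p.1⟫_ℂ * ⟪b p.2, x⟫_ℂ * ⟪b p.1, A (b p.2)⟫_ℂ *
        exp (I * (E p.1 - E p.2 : ℝ) * t) := by
  simp_rw [exp_smul_apply_eq_sum b heig, map_sum, map_smul, sum_inner, inner_sum, inner_smul_left,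
    inner_smul_right, Fintype.sum_prod_type]
  refine Finset.sum_congr rfl fun i _ => Finset.sum_congr rfl fun j _ => ?_
  have hphase : exp (starRingEnd ℂ (-(I * E i * t))) * exp (-(I * E j * t)) =
      exp (I * (E i - E j : ℝ) * t) := by
    rw [← exp_add]
    simp only [map_neg, map_mul, conj_I, conj_ofReal, ofReal_sub]
    ring_nf
  rw [map_mul, ← exp_conj, inner_conj_symm, ← hphase]
  ring

theorem tendsto_average_inner_exp_smul_apply (heig : ∀ i, H (b i) = (E i : ℂ) • b i)
    (hE : Function.Injective E) (A : V →L[ℂ] V) (x : V) :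
    Tendsto (fun T : ℝ => (∫ t in (0:ℝ)..T,
        ⟪NormedSpace.exp ((-(I * t)) • H) x, A (NormedSpace.exp ((-(I * t)) • H) x)⟫_ℂ) / T)
      atTop (𝓝 (∑ i, ⟪x, b i⟫_ℂ * ⟪b i, x⟫_ℂ * ⟪b i, A (b i)⟫_ℂ)) := by
  simp_rw [inner_exp_smul_apply_eq_sum b heig]
  convert tendsto_average_sum_cexp_I_mul _ (fun p : ι × ι => E p.1 - E p.2) using 2
  rw [Fintype.sum_prod_type]
  refine Finset.sum_congr rfl fun i _ => ?_
  rw [Finset.sum_eq_single i (fun j _ hji => by simp [sub_eq_zero, hE.ne hji.symm]) (by simp)]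
  simp

theorem continuous_inner_exp_smul_apply (heig : ∀ i, H (b i) = (E i : ℂ) • b i)
    (A : V →L[ℂ] V) (x : V) : Continuous fun t : ℝ =>
      ⟪NormedSpace.exp ((-(I * t)) • H) x, A (NormedSpace.exp ((-(I * t)) • H) x)⟫_ℂ := by
  simp_rw [inner_exp_smul_apply_eq_sum b heig]
  fun_prop

theorem tendsto_average_re_inner_exp_smul_apply (heig : ∀ i, H (b i) = (E i : ℂ) • b i)
    (hE : Function.Injective E) (A : V →L[ℂ] V) (x : V) :
    Tendsto (fun T : ℝ => (∫ t in (0:ℝ)..T,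
        (⟪NormedSpace.exp ((-(I * t)) • H) x, A (NormedSpace.exp ((-(I * t)) • H) x)⟫_ℂ).re) / T)
      atTop (𝓝 (∑ i, ‖⟪b i, x⟫_ℂ‖ ^ 2 * (⟪b i, A (b i)⟫_ℂ).re)) := by
  have hlim : (∑ i, ⟪x, b i⟫_ℂ * ⟪b i, x⟫_ℂ * ⟪b i, A (b i)⟫_ℂ).re =
      ∑ i, ‖⟪b i, x⟫_ℂ‖ ^ 2 * (⟪b i, A (b i)⟫_ℂ).re := by
    rw [re_sum]
    refine Finset.sum_congr rfl fun i _ => ?_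
    rw [← inner_conj_symm x (b i), conj_mul', ← ofReal_pow, re_ofReal_mul]
  rw [← hlim]
  refine ((continuous_re.tendsto _).comp
    (tendsto_average_inner_exp_smul_apply b heig hE A x)).congr fun T => ?_
  rw [Function.comp_apply, div_ofReal_re]
  exact congrArg (· / T) (intervalIntegral.intervalIntegral_re
    ((continuous_inner_exp_smul_apply b heig A x).intervalIntegrable 0 T)).symm

end Eigenbasis

theorem stmt2_general {V : Type*} [NormedAddCommGroup V] [InnerProductSpace ℂ V]
    [FiniteDimensional ℂ V]
    (D : ℕ) (hdim : Module.finrank ℂ V = D)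
    (H P : V →L[ℂ] V)
    (hH : IsSelfAdjoint H)
    (hP : IsSelfAdjoint P) (hP2 : P ∘L P = P)
    (E : Fin D → ℝ) (hE : Function.Injective E)
    (φ : Fin D → V) (hON : Orthonormal ℂ φ)
    (heig : ∀ α, H (φ α) = (E α : ℂ) • φ α)
    (η δ' : ℝ) (hη : η ∈ Set.Ioo (0:ℝ) 1)
    (hgood : ∀ α, 1 - η * δ' ≤ (⟪φ α, P (φ α)⟫_ℂ).re)
    (ψ₀ : V) (hψ₀ : ‖ψ₀‖ = 1) :
    (1 - δ' : ℝ) ≤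
      liminf (fun T : ℝ =>
        (volume {t ∈ Set.Ioo (0:ℝ) T |
          (⟪NormedSpace.exp ((-(Complex.I * t)) • H) ψ₀,
            P (NormedSpace.exp ((-(Complex.I * t)) • H) ψ₀)⟫_ℂ).re > 1 - η}).toReal / T)
        atTop := by
  let b : OrthonormalBasis (Fin D) ℂ V := OrthonormalBasis.mk hON
    (hON.linearIndependent.span_eq_top_of_card_eq_finrank' (by simp [hdim])).ge
  have hb : ⇑b = φ := OrthonormalBasis.coe_mk _ _
  rw [← hb] at heig hgood
  set ψ : ℝ → V := fun t => NormedSpace.exp ((-(I * t)) • H) ψ₀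
  set g : ℝ → ℝ := fun t => (⟪ψ t, (1 - P) (ψ t)⟫_ℂ).re
  have hg : Continuous g := continuous_re.comp (continuous_inner_exp_smul_apply b heig _ ψ₀)
  have hg0 : 0 ≤ g := fun t =>
    (ContinuousLinearMap.IsPositive.of_isStarProjection
      (IsStarProjection.one_sub ⟨hP2, hP⟩)).re_inner_nonneg_right _
  have hlevel : ∀ t, (⟪ψ t, P (ψ t)⟫_ℂ).re > 1 - η ↔ g t < η := by
    intro t
    have hnorm : ‖ψ t‖ = 1 := (norm_exp_smul_apply_of_isSelfAdjoint hH t ψ₀).trans hψ₀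
    have hself : (⟪ψ t, ψ t⟫_ℂ).re = 1 := by simp [hnorm]
    simp only [g, sub_apply, one_apply_eq_self, inner_sub_right, sub_re, hself]
    constructor <;> intro h <;> linarith
  have hsmall : ∑ i, ‖⟪b i, ψ₀⟫_ℂ‖ ^ 2 * (⟪b i, (1 - P) (b i)⟫_ℂ).re ≤ η * δ' := by
    calc _ ≤ ∑ i, ‖⟪b i, ψ₀⟫_ℂ‖ ^ 2 * (η * δ') := by
          refine Finset.sum_le_sum fun i _ => mul_le_mul_of_nonneg_left ?_ (by positivity)
          rw [sub_apply, one_apply_eq_self, inner_sub_right, b.inner_eq_one, sub_re, one_re]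
          linarith [hgood i]
      _ = η * δ' := by rw [← Finset.sum_mul, b.sum_sq_norm_inner_right, hψ₀, one_pow, one_mul]
  calc 1 - δ' ≤ 1 - (∑ i, ‖⟪b i, ψ₀⟫_ℂ‖ ^ 2 * (⟪b i, (1 - P) (b i)⟫_ℂ).re) / η :=
        sub_le_sub_left ((div_le_iff₀' hη.1).2 hsmall) 1
    _ ≤ liminf (fun T : ℝ => volume.real {t ∈ Set.Ioo (0:ℝ) T | g t < η} / T) atTop :=
        one_sub_div_le_liminf_volume_lt hη.1 hg hg0
          (tendsto_average_re_inner_exp_smul_apply b heig hE (1 - P) ψ₀)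
    _ = _ := by
        refine congrArg (liminf · atTop) (funext fun T => ?_)
        congr 3
        ext t
        exact and_congr_right fun _ => (hlevel t).symm

/-- let `H` be a self-adjoint operator on a `D`-dimensional complex inner
product space with pairwise distinct eigenvalues and orthonormal eigenbasis `φ₁,…,φ_D`,
and let `P` be an orthogonal projection. If `⟨φ_α, P φ_α⟩ ≥ 1 − ηδ'` for every `α`, then
every unit vector `ψ₀` satisfies
`liminf_{T→∞} (1/T)·Leb{t ∈ (0,T) : ⟨e^{−iHt}ψ₀, P e^{−iHt}ψ₀⟩ > 1 − η} ≥ 1 − δ'`. -/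
theorem stmt2 {V : Type*} [NormedAddCommGroup V] [InnerProductSpace ℂ V]
    [FiniteDimensional ℂ V]
    (D : ℕ) (hD : 0 < D) (hdim : Module.finrank ℂ V = D)
    (H P : V →L[ℂ] V)
    (hH : IsSelfAdjoint H)
    (hP : IsSelfAdjoint P) (hP2 : P ∘L P = P)
    (E : Fin D → ℝ) (hE : Function.Injective E)
    (φ : Fin D → V) (hON : Orthonormal ℂ φ)
    (heig : ∀ α, H (φ α) = (E α : ℂ) • φ α)
    (η δ' : ℝ) (hη : η ∈ Set.Ioo (0:ℝ) 1) (hδ' : δ' ∈ Set.Ioo (0:ℝ) 1)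
    (hgood : ∀ α, 1 - η * δ' ≤ (⟪φ α, P (φ α)⟫_ℂ).re)
    (ψ₀ : V) (hψ₀ : ‖ψ₀‖ = 1) :
    (1 - δ' : ℝ) ≤
      liminf (fun T : ℝ =>
        (volume {t ∈ Set.Ioo (0:ℝ) T |
          (⟪NormedSpace.exp ((-(Complex.I * t)) • H) ψ₀,
            P (NormedSpace.exp ((-(Complex.I * t)) • H) ψ₀)⟫_ℂ).re > 1 - η}).toReal / T)
        atTop :=
  stmt2_general D hdim H P hH hP hP2 E hE φ hON heig η δ' hη hgood ψ₀ hψ₀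
end

section
/- Let Z₁,…,Z_N be independent standard real Gaussian random variables (mean 0, variance 1) on a probability space, and let δ > 0. Then P( |(1/N)∑_{i=1}^N Z_i² − 1| > δ ) ≤ 2·exp( −N·(δ − log(1+δ))/2 ). -/
open MeasureTheory ProbabilityTheory Real
open scoped NNReal ENNReal

/-!
Each `Zᵢ²` has moment generating function `(1 - 2t)^(-1/2)` for `t < 1/2`, so by independence
`S = ∑ Zᵢ²` has `(1 - 2t)^(-N/2)`. The Chernoff bound at its optimal parameter `t = (1 - x⁻¹)/2`
gives `P(S ≥ N x) ≤ exp(-N I(x))` for `x ≥ 1` and `P(S ≤ N x) ≤ exp(-N I(x))` for `0 < x ≤ 1`,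
with the Cramér rate `I(x) = (x - 1 - log x)/2`. Take `x = 1 ± δ`; the lower tail obeys the upper
tail's bound because `log (1 + δ) - log (1 - δ) ≥ 2δ` gives `I(1 - δ) ≥ I(1 + δ)`.
-/

-- Both sides vanish when `1 ≤ 2 * v * t`: the integrand is then not integrable, and `√` of a
-- non-positive number is `0`.
theorem integral_exp_mul_sq_gaussianReal (v : ℝ≥0) (t : ℝ) :
    ∫ x, exp (t * x ^ 2) ∂gaussianReal 0 v = (√(1 - 2 * v * t))⁻¹ := by
  rcases eq_or_ne v 0 with rfl | hv
  · simp
  have hv' : (0 : ℝ) < v := by positivity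
  have hdensity : ∀ x : ℝ, gaussianPDFReal 0 v x * exp (t * x ^ 2)
      = (√(2 * π * v))⁻¹ * exp (-(1 / (2 * v) - t) * x ^ 2) := fun x => by
    rw [gaussianPDFReal, sub_zero, mul_assoc, ← exp_add]
    congr 2
    field_simp
    ring
  have hratio : π / (1 / (2 * v) - t) / (2 * π * v) = (1 - 2 * v * t)⁻¹ := by
    field_simp
  simp_rw [integral_gaussianReal_eq_integral_smul hv, smul_eq_mul, hdensity, integral_const_mul,
    integral_gaussian]
  rw [← sqrt_inv (1 - _), ← hratio, sqrt_div' (π / _) (by positivity : (0 : ℝ) ≤ 2 * π * v)]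
  ring

theorem mgf_sq_of_map_eq_gaussianReal {Ω : Type*} [MeasurableSpace Ω] {P : Measure Ω}
    {X : Ω → ℝ} {v : ℝ≥0} (hX : P.map X = gaussianReal 0 v) (t : ℝ) :
    mgf (fun ω => X ω ^ 2) P t = (√(1 - 2 * v * t))⁻¹ := by
  have hXm : AEMeasurable X P := .of_map_ne_zero (by simp [hX, NeZero.ne])
  rw [← Function.comp_def (fun x : ℝ => x ^ 2) X, ← mgf_map hXm (by fun_prop), hX, mgf,
    integral_exp_mul_sq_gaussianReal]

theorem ProbabilityTheory.iIndepFun.mgf_sum_sq_of_map_eq_gaussianReal {Ω ι : Type*}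
    [MeasurableSpace Ω] {P : Measure Ω} {Z : ι → Ω → ℝ} {v : ℝ≥0} (hindep : iIndepFun Z P)
    (hgauss : ∀ i, P.map (Z i) = gaussianReal 0 v) (s : Finset ι) (t : ℝ) :
    mgf (fun ω => ∑ i ∈ s, Z i ω ^ 2) P t = (√(1 - 2 * v * t))⁻¹ ^ s.card := by
  have hZm : ∀ i, AEMeasurable (Z i) P := fun i => .of_map_ne_zero (by simp [hgauss, NeZero.ne])
  have hsq : iIndepFun (fun i ω => Z i ω ^ 2) P :=
    hindep.comp₀ (fun _ x => x ^ 2) hZm (fun _ => by fun_prop)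
  rw [← Finset.sum_fn, hsq.mgf_sum₀ (fun i => (hZm i).pow_const 2)]
  simp [mgf_sq_of_map_eq_gaussianReal (hgauss _)]

noncomputable def chiSqRate (x : ℝ) : ℝ := (x - 1 - log x) / 2

theorem chiSqRate_one_add_le_one_sub {δ : ℝ} (h0 : 0 < δ) (h1 : δ < 1) :
    chiSqRate (1 + δ) ≤ chiSqRate (1 - δ) := by
  have hseries := hasSum_log_sub_log_of_abs_lt_one (abs_lt.2 ⟨by linarith, h1⟩)
  have h : 2 * δ ≤ log (1 + δ) - log (1 - δ) := by
    simpa using le_hasSum hseries 0 (fun k _ => by positivity)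
  unfold chiSqRate
  linarith

theorem exp_chernoff_chiSq_eq {x : ℝ} (hx : 0 < x) (n : ℕ) :
    exp (-((1 - x⁻¹) / 2) * (n * x)) * (√(1 - 2 * ((1 - x⁻¹) / 2)))⁻¹ ^ n
      = exp (-n * chiSqRate x) := by
  rw [show 1 - 2 * ((1 - x⁻¹) / 2) = x⁻¹ by ring, sqrt_inv, inv_inv, sqrt_eq_rpow,
    rpow_def_of_pos hx, ← exp_nat_mul, ← exp_add, chiSqRate]
  congr 1
  field_simp
  ring

section ChiSqTail

variable {Ω : Type*} [MeasurableSpace Ω] {P : Measure Ω} {S : Ω → ℝ} {n : ℕ}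

theorem integrable_exp_mul_of_mgf_eq_chiSq
    (hmgf : ∀ t < 1 / 2, mgf S P t = (√(1 - 2 * t))⁻¹ ^ n) {t : ℝ} (ht : t < 1 / 2) :
    Integrable (fun ω => exp (t * S ω)) P :=
  Integrable.of_integral_ne_zero <| show mgf S P t ≠ 0 by
    rw [hmgf t ht]
    exact (pow_pos (inv_pos.2 (sqrt_pos.2 (by linarith))) n).ne'

theorem measure_ge_le_of_mgf_eq_chiSq [IsFiniteMeasure P]
    (hmgf : ∀ t < 1 / 2, mgf S P t = (√(1 - 2 * t))⁻¹ ^ n) {x : ℝ} (hx : 1 ≤ x) :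
    P {ω | n * x ≤ S ω} ≤ ENNReal.ofReal (exp (-n * chiSqRate x)) := by
  have ht : (1 - x⁻¹) / 2 < 1 / 2 := by have := inv_pos.2 (zero_lt_one.trans_le hx); linarith
  have h := measure_ge_le_exp_mul_mgf (n * x) (by have := inv_le_one_of_one_le₀ hx; linarith)
    (integrable_exp_mul_of_mgf_eq_chiSq hmgf ht)
  rw [hmgf _ ht, exp_chernoff_chiSq_eq (zero_lt_one.trans_le hx)] at h
  exact (ENNReal.le_ofReal_iff_toReal_le (measure_ne_top _ _) (exp_pos _).le).2 h

theorem measure_le_le_of_mgf_eq_chiSq [IsFiniteMeasure P]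
    (hmgf : ∀ t < 1 / 2, mgf S P t = (√(1 - 2 * t))⁻¹ ^ n) {x : ℝ} (hx0 : 0 < x) (hx : x ≤ 1) :
    P {ω | S ω ≤ n * x} ≤ ENNReal.ofReal (exp (-n * chiSqRate x)) := by
  have ht : (1 - x⁻¹) / 2 ≤ 0 := by have := one_le_inv_iff₀.2 ⟨hx0, hx⟩; linarith
  have h := measure_le_le_exp_mul_mgf (n * x) ht
    (integrable_exp_mul_of_mgf_eq_chiSq hmgf (by linarith))
  rw [hmgf _ (by linarith), exp_chernoff_chiSq_eq hx0] at h
  exact (ENNReal.le_ofReal_iff_toReal_le (measure_ne_top _ _) (exp_pos _).le).2 h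

theorem measure_lt_one_sub_le_of_mgf_eq_chiSq [IsFiniteMeasure P]
    (hmgf : ∀ t < 1 / 2, mgf S P t = (√(1 - 2 * t))⁻¹ ^ n) (hS : 0 ≤ S) {δ : ℝ} (hδ : 0 < δ) :
    P {ω | S ω < n * (1 - δ)} ≤ ENNReal.ofReal (exp (-n * chiSqRate (1 + δ))) := by
  rcases lt_or_ge δ 1 with hδ1 | hδ1
  · refine (measure_mono fun ω (h : S ω < _) => h.le).trans <|
      (measure_le_le_of_mgf_eq_chiSq hmgf (by linarith) (by linarith)).trans <|
      ENNReal.ofReal_le_ofReal <| exp_le_exp.2 ?_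
    nlinarith [chiSqRate_one_add_le_one_sub hδ hδ1]
  · have hle : ∀ ω, n * (1 - δ) ≤ S ω := fun ω =>
      (mul_nonpos_of_nonneg_of_nonpos (Nat.cast_nonneg n) (by linarith)).trans (hS ω)
    simp [(hle _).not_gt]

theorem measure_abs_div_sub_one_gt_le_of_mgf_eq_chiSq [IsFiniteMeasure P]
    (hmgf : ∀ t < 1 / 2, mgf S P t = (√(1 - 2 * t))⁻¹ ^ n) (hS : 0 ≤ S) (hn : 0 < n) {δ : ℝ}
    (hδ : 0 < δ) :
    P {ω | δ < |S ω / n - 1|} ≤ ENNReal.ofReal (2 * exp (-n * chiSqRate (1 + δ))) := by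
  have hn' : (0 : ℝ) < n := by exact_mod_cast hn
  have hcover : {ω | δ < |S ω / n - 1|} ⊆ {ω | n * (1 + δ) ≤ S ω} ∪ {ω | S ω < n * (1 - δ)} :=
    fun ω (hω : δ < |_|) => (lt_abs.1 hω).imp (fun h => ((lt_div_iff₀' hn').1 (by linarith)).le)
      (fun h => (div_lt_iff₀' hn').1 (by linarith))
  calc P {ω | δ < |S ω / n - 1|}
      ≤ P {ω | n * (1 + δ) ≤ S ω} + P {ω | S ω < n * (1 - δ)} :=
        (measure_mono hcover).trans (measure_union_le _ _)
    _ ≤ _ := add_le_add (measure_ge_le_of_mgf_eq_chiSq hmgf (by linarith))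
        (measure_lt_one_sub_le_of_mgf_eq_chiSq hmgf hS hδ)
    _ = _ := by rw [← ENNReal.ofReal_add (exp_pos _).le (exp_pos _).le, ← two_mul]

end ChiSqTail

theorem stmt7_general {Ω : Type*} [MeasurableSpace Ω] (Pr : Measure Ω) [IsProbabilityMeasure Pr]
    (N : ℕ) (hN : 0 < N) (Z : Fin N → Ω → ℝ)
    (hindep : iIndepFun Z Pr)
    (hgauss : ∀ i, Measure.map (Z i) Pr = gaussianReal 0 1)
    (δ : ℝ) (hδ : 0 < δ) :
    Pr {ω | |(1 / (N : ℝ)) * ∑ i, (Z i ω)^2 - 1| > δ}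
      ≤ ENNReal.ofReal (2 * Real.exp (-(N : ℝ) * (δ - Real.log (1 + δ)) / 2)) := by
  have hmgf : ∀ t < 1 / 2, mgf (fun ω => ∑ i, Z i ω ^ 2) Pr t = (√(1 - 2 * t))⁻¹ ^ N :=
    fun t _ => by simpa using hindep.mgf_sum_sq_of_map_eq_gaussianReal hgauss Finset.univ t
  have hS : 0 ≤ fun ω => ∑ i, Z i ω ^ 2 := fun ω => Finset.sum_nonneg fun i _ => sq_nonneg _
  have hrate : -(N : ℝ) * chiSqRate (1 + δ) = -(N : ℝ) * (δ - log (1 + δ)) / 2 := by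
    simp only [chiSqRate]
    ring
  simpa only [one_div_mul_eq_div, gt_iff_lt, hrate] using
    measure_abs_div_sub_one_gt_le_of_mgf_eq_chiSq hmgf hS hN hδ

/-- for `Z₁,…,Z_N` i.i.d. standard real Gaussians and `δ > 0`,
`P(|(1/N)∑ Zᵢ² − 1| > δ) ≤ 2 exp(−N (δ − log(1+δ))/2)`. -/
theorem stmt7 {Ω : Type*} [MeasurableSpace Ω] (Pr : Measure Ω) [IsProbabilityMeasure Pr]
    (N : ℕ) (hN : 0 < N) (Z : Fin N → Ω → ℝ)
    (hmeas : ∀ i, Measurable (Z i))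
    (hindep : iIndepFun Z Pr)
    (hgauss : ∀ i, Measure.map (Z i) Pr = gaussianReal 0 1)
    (δ : ℝ) (hδ : 0 < δ) :
    Pr {ω | |(1 / (N : ℝ)) * ∑ i, (Z i ω)^2 - 1| > δ}
      ≤ ENNReal.ofReal (2 * Real.exp (-(N : ℝ) * (δ - Real.log (1 + δ)) / 2)) :=
  stmt7_general Pr N hN Z hindep hgauss δ hδ
end

section
/- Let D and d_eq be positive integers with D/2 < d_eq ≤ D, and let G₁,…,G_D be independent complex Gaussian random variables whose real and imaginary parts are 2D independent real Gaussians with mean 0 and variance 1/(2D). Then for every ε ∈ (0,1), the probability that the ratio ∑_{β=1}^{d_eq} |G_β|² / ∑_{β=1}^{D} |G_β|² fails to lie strictly between (1 − ε/2)·(d_eq/D) and (1 + ε/2)·(d_eq/D) is at most 4·exp( −D ε² / 384 ). -/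
/-!
Each `|G_β|²` is the sum of the squares of two `N(0, 1/(2D))` variables, so numerator and
denominator are sums of `2 d_eq` resp. `2D` independent Gaussian squares. For `Y ~ N(0, v)` one has
`E e^{tY²} = (1 - 2tv)^{-1/2} ≤ e^{tv + 2(tv)²}` when `|tv| ≤ 1/8`, so by Chernoff a sum of `n`
such squares deviates from its mean `n v` by a relative error `δ ≤ 1/2`, on either side, with
probability at most `e^{-nδ²/8}`. With `δ = ε/5`, outside these four events the ratio lies within
the factor `1 ± ε/2` of `d_eq/D`, and both sums have `n ≥ D` terms.
-/

open MeasureTheory ProbabilityTheory Real Finset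
open scoped NNReal

lemma Real.exp_neg_add_sq_le_one_sub {x : ℝ} (hx : |x| ≤ 1 / 4) : exp (-(x + x ^ 2)) ≤ 1 - x := by
  have hx1 : |x| < 1 := hx.trans_lt (by norm_num)
  have hpos : 0 < 1 - x := by linarith [le_abs_self x]
  have htaylor := abs_le.1 (abs_log_sub_add_sum_range_le hx1 2)
  simp only [sum_range_succ, sum_range_zero] at htaylor
  have hrem : |x| ^ 3 / (1 - |x|) ≤ x ^ 2 / 3 := by
    rw [div_le_iff₀ (by linarith), ← sq_abs x]
    nlinarith [abs_nonneg x]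
  rw [← exp_log hpos, exp_le_exp]
  push_cast at htaylor
  nlinarith [sq_nonneg x]

lemma Real.inv_sqrt_one_sub_two_mul_le_exp {s : ℝ} (hs : |s| ≤ 1 / 8) :
    (√(1 - 2 * s))⁻¹ ≤ exp (s + 2 * s ^ 2) := by
  have hbound := exp_neg_add_sq_le_one_sub (x := 2 * s) (by rw [abs_mul, abs_two]; linarith)
  rw [inv_le_comm₀ (sqrt_pos.2 ((exp_pos _).trans_le hbound)) (exp_pos _), ← exp_neg,
    le_sqrt (exp_pos _).le (by linarith [(exp_pos _).trans_le hbound]), ← exp_nat_mul]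
  convert hbound using 2
  push_cast; ring

lemma mgf_sq_gaussianReal {v : ℝ≥0} (hv : v ≠ 0) {t : ℝ} (ht : 2 * t * v < 1) :
    mgf (fun x => x ^ 2) (gaussianReal 0 v) t = (√(1 - 2 * t * v))⁻¹ := by
  have hv0 : (0 : ℝ) < v := by positivity
  set b := (1 - 2 * t * v) / (2 * v)
  have hdensity : ∀ x : ℝ,
      gaussianPDFReal 0 v x • exp (t * x ^ 2) = (√(2 * π * v))⁻¹ * exp (-b * x ^ 2) := by
    intro x
    rw [gaussianPDFReal, smul_eq_mul, mul_assoc, ← exp_add]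
    congr 2
    simp only [b]
    field_simp
    ring
  rw [mgf, integral_gaussianReal_eq_integral_smul hv]
  simp_rw [hdensity]
  have hπb : π / b = 2 * π * v / (1 - 2 * t * v) := by simp only [b]; field_simp
  rw [integral_const_mul, integral_gaussian, hπb, sqrt_div' _ (by linarith), div_eq_mul_inv,
    ← mul_assoc, inv_mul_cancel₀ (by positivity), one_mul]

lemma integrable_exp_mul_sq_gaussianReal {v : ℝ≥0} (hv : v ≠ 0) {t : ℝ} (ht : 2 * t * v < 1) :
    Integrable (fun x => exp (t * x ^ 2)) (gaussianReal 0 v) :=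
  mgf_pos_iff.1 (by rw [mgf_sq_gaussianReal hv ht]; exact inv_pos.2 (sqrt_pos.2 (by linarith)))

lemma div_mem_Ioo_of_mem_Ioo {a b T T₁ ε : ℝ} (ha : 0 < a) (hb : 0 < b) (hε : ε ≤ 1)
    (hT : T ∈ Set.Ioo ((1 - ε / 5) * a) ((1 + ε / 5) * a))
    (hT₁ : T₁ ∈ Set.Ioo ((1 - ε / 5) * b) ((1 + ε / 5) * b)) :
    T₁ / T ∈ Set.Ioo ((1 - ε / 2) * (b / a)) ((1 + ε / 2) * (b / a)) := by
  obtain ⟨p, hp, rfl⟩ : ∃ p, 0 < p ∧ b = p * a := ⟨b / a, div_pos hb ha, by field_simp⟩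
  obtain ⟨hT0, hT1⟩ := hT
  obtain ⟨hT₁0, hT₁1⟩ := hT₁
  have hε0 : 0 < ε := by nlinarith
  have hTpos : 0 < T := by nlinarith
  rw [mul_div_cancel_right₀ _ ha.ne']
  constructor
  · rw [lt_div_iff₀ hTpos]
    nlinarith [mul_lt_mul_of_pos_left hT1 (mul_pos (by linarith : 0 < 1 - ε / 2) hp)]
  · rw [div_lt_iff₀ hTpos]
    nlinarith [mul_lt_mul_of_pos_left hT0 (mul_pos (by linarith : 0 < 1 + ε / 2) hp)]

lemma sum_disjSum_sq_re_im {ι Ω : Type*} (G : ι → Ω → ℂ) (A : Finset ι) (ω : Ω) :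
    ∑ j ∈ A.disjSum A, Sum.elim (fun β ω => (G β ω).re) (fun β ω => (G β ω).im) j ω ^ 2
      = ∑ β ∈ A, ‖G β ω‖ ^ 2 := by
  rw [sum_disjSum, ← sum_add_distrib]
  refine sum_congr rfl fun β _ => ?_
  rw [Complex.sq_norm, Complex.normSq_apply, Sum.elim_inl, Sum.elim_inr]
  ring

namespace ProbabilityTheory

variable {Ω ι : Type*} [MeasurableSpace Ω] {Pr : Measure Ω} {v : ℝ≥0} {X : ι → Ω → ℝ}

lemma iIndepFun.mgf_sum_sq_le (hind : iIndepFun X Pr) (hXm : ∀ j, Measurable (X j))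
    (hmap : ∀ j, Pr.map (X j) = gaussianReal 0 v) (hv : v ≠ 0) (A : Finset ι) {t : ℝ}
    (ht : |t * v| ≤ 1 / 8) :
    mgf (∑ j ∈ A, fun ω => X j ω ^ 2) Pr t ≤ exp (#A * (t * v + 2 * (t * v) ^ 2)) := by
  have ht2 : 2 * t * v < 1 := by linarith [le_abs_self (t * v)]
  have hmgf : ∀ j, mgf (fun ω => X j ω ^ 2) Pr t ≤ exp (t * v + 2 * (t * v) ^ 2) := fun j => by
    calc mgf (fun ω => X j ω ^ 2) Pr t = mgf (fun x => x ^ 2) (Pr.map (X j)) t :=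
          (mgf_map (hXm j).aemeasurable (X := fun x => x ^ 2)
            (by fun_prop : Measurable fun x : ℝ => exp (t * x ^ 2)).aestronglyMeasurable).symm
      _ = (√(1 - 2 * (t * v)))⁻¹ := by rw [hmap j, mgf_sq_gaussianReal hv ht2, mul_assoc]
      _ ≤ exp (t * v + 2 * (t * v) ^ 2) := inv_sqrt_one_sub_two_mul_le_exp ht
  have hsq : iIndepFun (fun j ω => X j ω ^ 2) Pr :=
    hind.comp (fun _ x => x ^ 2) (fun _ => by fun_prop)
  rw [hsq.mgf_sum (fun j => by fun_prop), exp_nat_mul, ← Finset.prod_const]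
  exact Finset.prod_le_prod (fun _ _ => mgf_nonneg) (fun j _ => hmgf j)

lemma iIndepFun.integrable_exp_mul_sum_sq (hind : iIndepFun X Pr) (hXm : ∀ j, Measurable (X j))
    (hmap : ∀ j, Pr.map (X j) = gaussianReal 0 v) (hv : v ≠ 0) (A : Finset ι) {t : ℝ}
    (ht : 2 * t * v < 1) :
    Integrable (fun ω => exp (t * (∑ j ∈ A, fun ω => X j ω ^ 2) ω)) Pr := by
  have := hind.isProbabilityMeasure
  have hsq : iIndepFun (fun j ω => X j ω ^ 2) Pr :=
    hind.comp (fun _ x => x ^ 2) (fun _ => by fun_prop)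
  refine hsq.integrable_exp_mul_sum (fun j => by fun_prop) fun j _ => ?_
  exact (integrable_map_measure (by fun_prop) (hXm j).aemeasurable).1
    (hmap j ▸ integrable_exp_mul_sq_gaussianReal hv ht)

lemma iIndepFun.measureReal_sum_sq_ge_le (hind : iIndepFun X Pr) (hXm : ∀ j, Measurable (X j))
    (hmap : ∀ j, Pr.map (X j) = gaussianReal 0 v) (hv : v ≠ 0) (A : Finset ι) {δ : ℝ}
    (hδ0 : 0 ≤ δ) (hδ : δ ≤ 1 / 2) :
    Pr.real {ω | (1 + δ) * (#A * v) ≤ ∑ j ∈ A, X j ω ^ 2} ≤ exp (-(#A * δ ^ 2 / 8)) := by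
  have := hind.isProbabilityMeasure
  have hv0 : (0 : ℝ) < v := by positivity
  -- `t = δ / (4v)` minimises the Chernoff exponent `n (-tvδ + 2 (tv)²)`.
  set t := δ / (4 * v)
  have htv : t * v = δ / 4 := by simp only [t]; field_simp
  have hchernoff := measure_ge_le_exp_mul_mgf ((1 + δ) * (#A * v)) (by positivity)
    (hind.integrable_exp_mul_sum_sq hXm hmap hv A (t := t) (by rw [mul_assoc, htv]; linarith))
  simp only [Finset.sum_apply] at hchernoff
  refine hchernoff.trans ?_
  calc exp (-t * ((1 + δ) * (#A * v))) * mgf (∑ j ∈ A, fun ω => X j ω ^ 2) Pr t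
      ≤ exp (-t * ((1 + δ) * (#A * v))) * exp (#A * (t * v + 2 * (t * v) ^ 2)) := by
        gcongr
        exact hind.mgf_sum_sq_le hXm hmap hv A
          (by rw [htv, abs_of_nonneg (by positivity)]; linarith)
    _ = exp (-(#A * δ ^ 2 / 8)) := by
        rw [← exp_add]
        congr 1
        linear_combination (-δ * #A + 2 * #A * (t * v) + #A * δ / 2) * htv

lemma iIndepFun.measureReal_sum_sq_le_le (hind : iIndepFun X Pr) (hXm : ∀ j, Measurable (X j))
    (hmap : ∀ j, Pr.map (X j) = gaussianReal 0 v) (hv : v ≠ 0) (A : Finset ι) {δ : ℝ}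
    (hδ0 : 0 ≤ δ) (hδ : δ ≤ 1 / 2) :
    Pr.real {ω | ∑ j ∈ A, X j ω ^ 2 ≤ (1 - δ) * (#A * v)} ≤ exp (-(#A * δ ^ 2 / 8)) := by
  have := hind.isProbabilityMeasure
  have hv0 : (0 : ℝ) < v := by positivity
  set t := -δ / (4 * v)
  have htv : t * v = -δ / 4 := by simp only [t]; field_simp
  have hchernoff := measure_le_le_exp_mul_mgf ((1 - δ) * (#A * v))
    (div_nonpos_of_nonpos_of_nonneg (by linarith) (by positivity))
    (hind.integrable_exp_mul_sum_sq hXm hmap hv A (t := t) (by rw [mul_assoc, htv]; linarith))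
  simp only [Finset.sum_apply] at hchernoff
  refine hchernoff.trans ?_
  calc exp (-t * ((1 - δ) * (#A * v))) * mgf (∑ j ∈ A, fun ω => X j ω ^ 2) Pr t
      ≤ exp (-t * ((1 - δ) * (#A * v))) * exp (#A * (t * v + 2 * (t * v) ^ 2)) := by
        gcongr
        exact hind.mgf_sum_sq_le hXm hmap hv A
          (by rw [htv, abs_of_nonpos (by linarith)]; linarith)
    _ = exp (-(#A * δ ^ 2 / 8)) := by
        rw [← exp_add]
        congr 1
        linear_combination (δ * #A + 2 * #A * (t * v) - #A * δ / 2) * htv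

lemma iIndepFun.measureReal_sum_sq_div_sum_sq_notMem_Ioo (hind : iIndepFun X Pr)
    (hXm : ∀ j, Measurable (X j)) (hmap : ∀ j, Pr.map (X j) = gaussianReal 0 v) (hv : v ≠ 0)
    {A B : Finset ι} (hA : A.Nonempty) (hB : B.Nonempty) {ε : ℝ} (hε0 : 0 ≤ ε) (hε1 : ε ≤ 1) :
    Pr.real {ω | (∑ j ∈ B, X j ω ^ 2) / (∑ j ∈ A, X j ω ^ 2)
        ∉ Set.Ioo ((1 - ε / 2) * (#B / #A)) ((1 + ε / 2) * (#B / #A))}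
      ≤ 2 * exp (-(#A * ε ^ 2 / 200)) + 2 * exp (-(#B * ε ^ 2 / 200)) := by
  have := hind.isProbabilityMeasure
  have hv0 : (0 : ℝ) < v := by positivity
  have hδ0 : 0 ≤ ε / 5 := by linarith
  have hδ : ε / 5 ≤ 1 / 2 := by linarith
  have hsub : {ω | (∑ j ∈ B, X j ω ^ 2) / (∑ j ∈ A, X j ω ^ 2)
        ∉ Set.Ioo ((1 - ε / 2) * (#B / #A)) ((1 + ε / 2) * (#B / #A))} ⊆
      ({ω | ∑ j ∈ A, X j ω ^ 2 ≤ (1 - ε / 5) * (#A * v)} ∪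
        {ω | (1 + ε / 5) * (#A * v) ≤ ∑ j ∈ A, X j ω ^ 2}) ∪
      ({ω | ∑ j ∈ B, X j ω ^ 2 ≤ (1 - ε / 5) * (#B * v)} ∪
        {ω | (1 + ε / 5) * (#B * v) ≤ ∑ j ∈ B, X j ω ^ 2}) := by
    intro ω hω
    contrapose! hω
    simp only [Set.mem_union, Set.mem_ofPred_eq, not_or, not_le, not_not] at hω ⊢
    obtain ⟨⟨hA₁, hA₂⟩, hB₁, hB₂⟩ := hω
    have hratio := div_mem_Ioo_of_mem_Ioo (mul_pos (by exact_mod_cast hA.card_pos) hv0)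
      (mul_pos (by exact_mod_cast hB.card_pos) hv0) hε1 ⟨hA₁, hA₂⟩ ⟨hB₁, hB₂⟩
    rwa [mul_div_mul_right _ _ hv0.ne'] at hratio
  have hexp : ∀ n : ℝ, n * (ε / 5) ^ 2 / 8 = n * ε ^ 2 / 200 := fun n => by ring
  have hA₁ := hind.measureReal_sum_sq_le_le hXm hmap hv A hδ0 hδ
  have hA₂ := hind.measureReal_sum_sq_ge_le hXm hmap hv A hδ0 hδ
  have hB₁ := hind.measureReal_sum_sq_le_le hXm hmap hv B hδ0 hδ
  have hB₂ := hind.measureReal_sum_sq_ge_le hXm hmap hv B hδ0 hδ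
  rw [hexp] at hA₁ hA₂ hB₁ hB₂
  refine (measureReal_mono hsub).trans <| (measureReal_union_le _ _).trans ?_
  linarith [measureReal_union_le (μ := Pr) {ω | ∑ j ∈ A, X j ω ^ 2 ≤ (1 - ε / 5) * (#A * v)}
      {ω | (1 + ε / 5) * (#A * v) ≤ ∑ j ∈ A, X j ω ^ 2},
    measureReal_union_le (μ := Pr) {ω | ∑ j ∈ B, X j ω ^ 2 ≤ (1 - ε / 5) * (#B * v)}
      {ω | (1 + ε / 5) * (#B * v) ≤ ∑ j ∈ B, X j ω ^ 2}]

end ProbabilityTheory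

theorem stmt11_general {Ω : Type*} [MeasurableSpace Ω] (Pr : Measure Ω)
    (D deq : ℕ) (hD : 0 < D) (hdeq : deq ≤ D) (hhalf : (D : ℝ)/2 < deq)
    (G : Fin D → Ω → ℂ)
    (hmeas : ∀ β, Measurable (G β))
    (hindep : iIndepFun
      (Sum.elim (fun β : Fin D => fun ω => (G β ω).re)
                (fun β : Fin D => fun ω => (G β ω).im)) Pr)
    (hgauss : ∀ j : Fin D ⊕ Fin D,
      Measure.map
        (Sum.elim (fun β : Fin D => fun ω => (G β ω).re)
                  (fun β : Fin D => fun ω => (G β ω).im) j) Pr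
        = gaussianReal 0 (1 / (2 * D) : ℝ≥0))
    (ε : ℝ) (hε : ε ∈ Set.Ioo (0:ℝ) 1) :
    Pr {ω | ¬ ((1 - ε/2) * ((deq : ℝ)/D)
            < (∑ β ∈ Finset.univ.filter (fun β : Fin D => (β : ℕ) < deq), ‖G β ω‖^2)
              / (∑ β, ‖G β ω‖^2)
          ∧ (∑ β ∈ Finset.univ.filter (fun β : Fin D => (β : ℕ) < deq), ‖G β ω‖^2)
              / (∑ β, ‖G β ω‖^2)
            < (1 + ε/2) * ((deq : ℝ)/D))}
      ≤ ENNReal.ofReal (4 * Real.exp (-((D : ℝ) * ε^2) / 384)) := by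
  have := hindep.isProbabilityMeasure
  have h2deq : D < 2 * deq := by exact_mod_cast (by linarith : (D : ℝ) < 2 * deq)
  set A := univ.filter (fun β : Fin D => (β : ℕ) < deq)
  have hA : #A = deq := by rw [Fin.card_filter_val_lt, min_eq_right hdeq]
  have hXm : ∀ j, Measurable (Sum.elim (fun β : Fin D => fun ω => (G β ω).re)
      (fun β : Fin D => fun ω => (G β ω).im) j) := by
    rintro (β | β)
    exacts [Complex.measurable_re.comp (hmeas β), Complex.measurable_im.comp (hmeas β)]
  have hratio := hindep.measureReal_sum_sq_div_sum_sq_notMem_Ioo hXm hgauss (by simp; omega)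
    (A := univ.disjSum univ) (B := A.disjSum A) ⟨.inl ⟨0, hD⟩, by simp⟩
    ⟨.inl ⟨0, hD⟩, by simp [A]; omega⟩
    hε.1.le hε.2.le
  have hcard : ((deq + deq : ℕ) : ℝ) / ((D + D : ℕ) : ℝ) = deq / D := by
    push_cast
    rw [← two_mul, ← two_mul, mul_div_mul_left _ _ two_ne_zero]
  simp only [sum_disjSum_sq_re_im, card_disjSum, card_univ, Fintype.card_fin, hA, hcard] at hratio
  have htail : ∀ n : ℕ, D ≤ n → exp (-(n * ε ^ 2 / 200)) ≤ exp (-(D * ε ^ 2) / 384) := by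
    intro n hn
    have : (D : ℝ) ≤ n := by exact_mod_cast hn
    gcongr
    nlinarith [sq_nonneg ε]
  rw [← ofReal_measureReal (measure_ne_top _ _)]
  refine ENNReal.ofReal_le_ofReal (hratio.trans ?_)
  linarith [htail (D + D) (by omega), htail (deq + deq) (by omega)]

/-- for a standard complex Gaussian vector `G = (G₁,…,G_D)` (real and
imaginary parts `2D` independent real Gaussians of mean `0`, variance `1/(2D)`) and
`D/2 < d_eq ≤ D`, for every `ε ∈ (0,1)`, the probability that
`∑_{β≤d_eq}|G_β|² / ∑_{β≤D}|G_β|²` fails to lie strictly between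
`(1 − ε/2)(d_eq/D)` and `(1 + ε/2)(d_eq/D)` is at most `4 exp(−D ε²/384)`. -/
theorem stmt11 {Ω : Type*} [MeasurableSpace Ω] (Pr : Measure Ω) [IsProbabilityMeasure Pr]
    (D deq : ℕ) (hD : 0 < D) (hdeq : deq ≤ D) (hhalf : (D : ℝ)/2 < deq)
    (G : Fin D → Ω → ℂ)
    (hmeas : ∀ β, Measurable (G β))
    (hindep : iIndepFun
      (Sum.elim (fun β : Fin D => fun ω => (G β ω).re)
                (fun β : Fin D => fun ω => (G β ω).im)) Pr)
    (hgauss : ∀ j : Fin D ⊕ Fin D,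
      Measure.map
        (Sum.elim (fun β : Fin D => fun ω => (G β ω).re)
                  (fun β : Fin D => fun ω => (G β ω).im) j) Pr
        = gaussianReal 0 (1 / (2 * D) : ℝ≥0))
    (ε : ℝ) (hε : ε ∈ Set.Ioo (0:ℝ) 1) :
    Pr {ω | ¬ ((1 - ε/2) * ((deq : ℝ)/D)
            < (∑ β ∈ Finset.univ.filter (fun β : Fin D => (β : ℕ) < deq), ‖G β ω‖^2)
              / (∑ β, ‖G β ω‖^2)
          ∧ (∑ β ∈ Finset.univ.filter (fun β : Fin D => (β : ℕ) < deq), ‖G β ω‖^2)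
              / (∑ β, ‖G β ω‖^2)
            < (1 + ε/2) * ((deq : ℝ)/D))}
      ≤ ENNReal.ofReal (4 * Real.exp (-((D : ℝ) * ε^2) / 384)) :=
  stmt11_general Pr D deq hD hdeq hhalf G hmeas hindep hgauss ε hε
end
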